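/- Let Y be a set and let X = Y × ℝ₊ be the set of dated rewards. Every stationary preorder ≽ on X has an extension to a complete preorder on X that is stationary. -/

import Mathlib

/-- The strict part of a binary relation: `x ≻ y` iff `x ≽ y` and not `y ≽ x`. -/
def StrictRel {X : Type*} (R : X → X → Prop) (x y : X) : Prop := R x y ∧ ¬ R y x

/-- `R'` is an extension of `R`. -/
def IsExtension {X : Type*} (R R' : X → X → Prop) : Prop :=
  (∀ x y, R x y → R' x y) ∧ (∀ x y, StrictRel R x y → StrictRel R' x y)

/-- A relation on the space `Y × ℝ₊` of dated rewards is stationary if shifting both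
dates by a common delay `s ≥ 0` preserves both the weak and the strict relation. -/
def Stationary {Y : Type*} (R : Y × NNReal → Y × NNReal → Prop) : Prop :=
  ∀ (y y' : Y) (t t' s : NNReal),
    (R (y, t) (y', t') → R (y, t + s) (y', t' + s)) ∧
    (StrictRel R (y, t) (y', t') → StrictRel R (y, t + s) (y', t' + s))

namespace SPEaux

variable {Y : Type*}

/-- Shift of a dated reward (real dates). -/
def shift (g : ℝ) (x : Y × ℝ) : Y × ℝ := (x.1, x.2 + g)

lemma shift_shift (g h : ℝ) (x : Y × ℝ) : shift g (shift h x) = shift (h + g) x := by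
  simp [shift, add_assoc]

lemma shift_zero (x : Y × ℝ) : shift 0 x = x := by simp [shift]

/-- Invariance of a relation under common shifts. -/
def Invt (P : Y × ℝ → Y × ℝ → Prop) : Prop :=
  ∀ x y (s : ℝ), P x y → P (shift s x) (shift s y)

lemma invt_iff {P : Y × ℝ → Y × ℝ → Prop} (h : Invt P) (x y : Y × ℝ) (s : ℝ) :
    P (shift s x) (shift s y) ↔ P x y := by
  constructor
  · intro hP
    have := h _ _ (-s) hP
    simpa [shift_shift, shift_zero] using this
  · exact h x y s

/-- The one-step enlargement relation: add the orbit of the pair `(a, b)`. -/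
def Sab (P : Y × ℝ → Y × ℝ → Prop) (a b : Y × ℝ) (p q : Y × ℝ) : Prop :=
  P p q ∨ ∃ g : ℝ, p = shift g a ∧ q = shift g b

lemma rtg_invt {P : Y × ℝ → Y × ℝ → Prop} (hinv : Invt P) (a b : Y × ℝ) :
    Invt (Relation.ReflTransGen (Sab P a b)) := by
  intro x y s h
  refine Relation.ReflTransGen.lift (shift s) (fun p q hpq => ?_) _ _ h
  rcases hpq with hP | ⟨g, rfl, rfl⟩
  · exact Or.inl (hinv _ _ s hP)
  · exact Or.inr ⟨g + s, by rw [shift_shift], by rw [shift_shift]⟩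

/-- Alternating chain lemma: stringing together `es.length` links of the form
`a ≽ b + e` and `ds.length` links of the form `b ≽ a + d`. -/
lemma chainAB {P : Y × ℝ → Y × ℝ → Prop} (htrans : Transitive P) (hinv : Invt P)
    (a b : Y × ℝ) :
    ∀ (ds es : List ℝ), (∀ d ∈ ds, P b (shift d a)) → (∀ e ∈ es, P a (shift e b)) →
      es.length = ds.length + 1 → ∀ t : ℝ, P (shift t a) (shift (t + ds.sum + es.sum) b) := by
  intro ds
  induction ds with
  | nil =>
    intro es _ hes hlen t
    match es, hlen with
    | [e], _ =>
      have h1 : P a (shift e b) := hes e (by simp)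
      have h2 := hinv _ _ t h1
      rw [shift_shift] at h2
      have : e + t = t + List.sum ([] : List ℝ) + List.sum [e] := by simp; ring
      rwa [← this]
  | cons d ds' ih =>
    intro es hds hes hlen t
    match es, hlen with
    | e :: es', hlen =>
      have hlen' : es'.length = ds'.length + 1 := by
        simpa using hlen
      have h1 : P a (shift e b) := hes e (by simp)
      have h2 : P b (shift d a) := hds d (by simp)
      have step1 : P (shift t a) (shift (e + t) b) := by
        have := hinv _ _ t h1; rwa [shift_shift] at this
      have step2 : P (shift (e + t) b) (shift (d + (e + t)) a) := by
        have := hinv _ _ (e + t) h2; rwa [shift_shift] at this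
      have step3 : P (shift (d + (e + t)) a)
          (shift ((d + (e + t)) + ds'.sum + es'.sum) b) :=
        ih es' (fun x hx => hds x (by simp [hx])) (fun x hx => hes x (by simp [hx]))
          hlen' (d + (e + t))
      have hsum : (d + (e + t)) + ds'.sum + es'.sum
          = t + (d :: ds').sum + (e :: es').sum := by
        simp [List.sum_cons]; ring
      rw [hsum] at step3
      exact htrans (htrans step1 step2) step3

/-- Structure extracted from a `ReflTransGen` chain of the enlarged relation. -/
lemma extract {P : Y × ℝ → Y × ℝ → Prop} (hrefl : Reflexive P) (htrans : Transitive P)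
    (hinv : Invt P) (a b : Y × ℝ) {u v : Y × ℝ}
    (h : Relation.ReflTransGen (Sab P a b) u v) :
    P u v ∨ ∃ (g h' : ℝ) (ds : List ℝ), (∀ d ∈ ds, P b (shift d a)) ∧
      P u (shift g a) ∧ P (shift h' b) v ∧ h' = g + ds.sum := by
  induction h with
  | refl => exact Or.inl (hrefl u)
  | tail hwv hstep ih =>
    rename_i w v'
    rcases ih with hP | ⟨g, h', ds, hds, h1, h2, h3⟩
    · rcases hstep with hP2 | ⟨g, rfl, rfl⟩
      · exact Or.inl (htrans hP hP2)
      · exact Or.inr ⟨g, g, [], by simp, hP, hrefl _, by simp⟩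
    · rcases hstep with hP2 | ⟨g', hw, rfl⟩
      · exact Or.inr ⟨g, h', ds, hds, h1, htrans h2 hP2, h3⟩
      · refine Or.inr ⟨g, g', ds ++ [g' - h'], ?_, h1, hrefl _, ?_⟩
        · intro d hd
          rcases List.mem_append.1 hd with hd | hd
          · exact hds d hd
          · have hd' : d = g' - h' := by simpa using hd
            subst hd'
            have h2' : P (shift h' b) (shift g' a) := by rw [← hw]; exact h2
            have := hinv _ _ (-h') h2'
            rw [shift_shift, shift_shift] at this
            simpa [shift_zero, sub_eq_add_neg] using this
        · simp only [List.sum_append, List.sum_cons, List.sum_nil, h3]; ring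

/-- If adding the orbit of `(a,b)` to `P` destroys a `P`-strict pair, we obtain a
"cycle witness". -/
lemma failure_cycle {P : Y × ℝ → Y × ℝ → Prop} (hrefl : Reflexive P) (htrans : Transitive P)
    (hinv : Invt P) (a b x y : Y × ℝ) (hstrict : StrictRel P x y)
    (hQ : Relation.ReflTransGen (Sab P a b) y x) :
    ∃ (d₀ : ℝ) (ds : List ℝ), StrictRel P b (shift d₀ a) ∧
      (∀ d ∈ ds, P b (shift d a)) ∧ d₀ + ds.sum = 0 := by
  rcases extract hrefl htrans hinv a b hQ with hP | ⟨g, h', ds, hds, h1, h2, h3⟩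
  · exact absurd hP hstrict.2
  · refine ⟨g - h', ds, ⟨?_, ?_⟩, hds, by rw [h3]; ring⟩
    · -- P b (shift (g - h') a)
      have hba : P (shift h' b) (shift g a) := htrans h2 (htrans hstrict.1 h1)
      have := hinv _ _ (-h') hba
      rw [shift_shift, shift_shift] at this
      simpa [shift_zero, sub_eq_add_neg] using this
    · -- strictness
      intro hrev
      have := hinv _ _ h' hrev
      rw [shift_shift] at this
      have hga : P (shift g a) (shift h' b) := by
        have hx : g - h' + h' = g := by ring
        rwa [hx] at this
      exact hstrict.2 (htrans h1 (htrans hga h2))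

/-- It is impossible that adding the orbit of `(a,b)` and adding the orbit of `(b,a)`
both destroy strict pairs. -/
lemma no_double_failure {P : Y × ℝ → Y × ℝ → Prop} (hrefl : Reflexive P)
    (htrans : Transitive P) (hinv : Invt P) (a b : Y × ℝ)
    (d₀ : ℝ) (ds : List ℝ) (hd₀ : StrictRel P b (shift d₀ a))
    (hds : ∀ d ∈ ds, P b (shift d a)) (hdsum : d₀ + ds.sum = 0)
    (e₀ : ℝ) (es : List ℝ) (he₀ : StrictRel P a (shift e₀ b))
    (hes : ∀ e ∈ es, P a (shift e b)) (hesum : e₀ + es.sum = 0) : False := by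
  classical
  set Ds : List ℝ := d₀ :: ds with hDs
  set Es : List ℝ := e₀ :: es with hEs
  have hDsmem : ∀ d ∈ Ds, P b (shift d a) := by
    intro d hd
    rcases List.mem_cons.1 hd with rfl | hd
    · exact hd₀.1
    · exact hds d hd
  have hEsmem : ∀ e ∈ Es, P a (shift e b) := by
    intro e he
    rcases List.mem_cons.1 he with rfl | he
    · exact he₀.1
    · exact hes e he
  have hDsum : Ds.sum = 0 := by simp [hDs, hdsum]
  have hEsum : Es.sum = 0 := by simp [hEs, hesum]
  set n : ℕ := Ds.length with hn
  set dstar : List ℝ := ds ++ (List.replicate es.length Ds).flatten with hdstar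
  set estar : List ℝ := (List.replicate n Es).flatten with hestar
  have hdmem : ∀ d ∈ dstar, P b (shift d a) := by
    intro d hd
    rcases List.mem_append.1 hd with hd | hd
    · exact hds d hd
    · rcases List.mem_flatten.1 hd with ⟨l, hl, hdl⟩
      have : l = Ds := (List.eq_of_mem_replicate hl)
      exact hDsmem d (this ▸ hdl)
  have hemem : ∀ e ∈ estar, P a (shift e b) := by
    intro e he
    rcases List.mem_flatten.1 he with ⟨l, hl, hel⟩
    have : l = Es := (List.eq_of_mem_replicate hl)
    exact hEsmem e (this ▸ hel)
  have hdlen : dstar.length = ds.length + es.length * n := by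
    simp [hdstar, List.length_flatten, Function.comp, hn]
  have helen : estar.length = n * Es.length := by
    simp [hestar, List.length_flatten, Function.comp]
  have hlen : estar.length = dstar.length + 1 := by
    rw [hdlen, helen, hEs, hn, hDs]
    simp [List.length_cons]
    ring
  have hdsum' : dstar.sum = -d₀ := by
    have : ((List.replicate es.length Ds).flatten).sum = 0 := by
      rw [List.sum_flatten]
      simp [hDsum]
    rw [hdstar, List.sum_append, this]
    linarith
  have hesum' : estar.sum = 0 := by
    rw [hestar, List.sum_flatten]
    simp [hEsum]
  have := chainAB htrans hinv a b dstar estar hdmem hemem hlen d₀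
  rw [hdsum', hesum'] at this
  have h0 : d₀ + -d₀ + 0 = 0 := by ring
  rw [h0, shift_zero] at this
  exact hd₀.2 this

end SPEaux

open SPEaux in
/-- Every stationary preorder on the space of dated rewards `Y × ℝ₊` extends to a
stationary complete preorder. -/
theorem stationary_preorder_extension (Y : Type*)
    (R : Y × NNReal → Y × NNReal → Prop) (hrefl : Reflexive R) (htrans : Transitive R)
    (hstat : Stationary R) :
    ∃ R' : Y × NNReal → Y × NNReal → Prop, IsExtension R R' ∧ Reflexive R' ∧
      Transitive R' ∧ (∀ x y, R' x y ∨ R' y x) ∧ Stationary R' := by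
  classical
  -- the embedding into real-dated rewards
  set ι : Y × NNReal → Y × ℝ := fun x => (x.1, (x.2 : ℝ)) with hι
  -- the invariant hull of R on Y × ℝ
  set Rb : Y × ℝ → Y × ℝ → Prop := fun x z => ∃ s : ℝ, 0 ≤ x.2 + s ∧ 0 ≤ z.2 + s ∧
    R (x.1, (x.2 + s).toNNReal) (z.1, (z.2 + s).toNNReal) with hRb
  have hRbrefl : Reflexive Rb := by
    intro x
    exact ⟨-x.2, by simp, by simp, hrefl _⟩
  have hRbtrans : Transitive Rb := by
    rintro x y z ⟨s, hs1, hs2, hRs⟩ ⟨u, hu1, hu2, hRu⟩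
    refine ⟨max s u, ?_, ?_, ?_⟩
    · have := le_max_left s u; linarith
    · have := le_max_right s u; linarith
    · have hshift1 := (hstat x.1 y.1 _ _ (max s u - s).toNNReal).1 hRs
      have hshift2 := (hstat y.1 z.1 _ _ (max s u - u).toNNReal).1 hRu
      have e1 : (x.2 + s).toNNReal + (max s u - s).toNNReal = (x.2 + max s u).toNNReal := by
        rw [← Real.toNNReal_add hs1 (by linarith [le_max_left s u])]
        congr 1; ring
      have e2 : (y.2 + s).toNNReal + (max s u - s).toNNReal = (y.2 + max s u).toNNReal := by
        rw [← Real.toNNReal_add hs2 (by linarith [le_max_left s u])]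
        congr 1; ring
      have e3 : (y.2 + u).toNNReal + (max s u - u).toNNReal = (y.2 + max s u).toNNReal := by
        rw [← Real.toNNReal_add hu1 (by linarith [le_max_right s u])]
        congr 1; ring
      have e4 : (z.2 + u).toNNReal + (max s u - u).toNNReal = (z.2 + max s u).toNNReal := by
        rw [← Real.toNNReal_add hu2 (by linarith [le_max_right s u])]
        congr 1; ring
      rw [e1, e2] at hshift1
      rw [e3, e4] at hshift2
      exact htrans hshift1 hshift2
  have hRbinv : Invt Rb := by
    rintro x z s ⟨u, hu1, hu2, hRu⟩
    refine ⟨u - s, ?_, ?_, ?_⟩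
    · simp [shift]; linarith
    · simp [shift]; linarith
    · have e1 : (shift s x).2 + (u - s) = x.2 + u := by simp only [shift]; ring
      have e2 : (shift s z).2 + (u - s) = z.2 + u := by simp only [shift]; ring
      rw [e1, e2]
      exact hRu
  -- Rb extends R along ι (weak and strict)
  have hext_weak : ∀ x z, R x z → Rb (ι x) (ι z) := by
    intro x z hxz
    exact ⟨0, by simp [hι], by simp [hι], by simpa [hι] using hxz⟩
  have hext_strict : ∀ x z, StrictRel R x z → StrictRel Rb (ι x) (ι z) := by
    intro x z hxz
    refine ⟨hext_weak x z hxz.1, ?_⟩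
    rintro ⟨s, hs1, hs2, hRs⟩
    simp only [hι] at hs1 hs2 hRs
    rcases le_or_gt 0 s with hs | hs
    · have e1 : ((z.2 : ℝ) + s).toNNReal = z.2 + s.toNNReal := by
        rw [Real.toNNReal_add z.2.coe_nonneg hs, Real.toNNReal_coe]
      have e2 : ((x.2 : ℝ) + s).toNNReal = x.2 + s.toNNReal := by
        rw [Real.toNNReal_add x.2.coe_nonneg hs, Real.toNNReal_coe]
      rw [e1, e2] at hRs
      have := (hstat x.1 z.1 x.2 z.2 s.toNNReal).2 hxz
      exact this.2 (by exact hRs)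
    · -- s < 0 : shift the reversed relation forward by -s
      have := (hstat z.1 x.1 _ _ (-s).toNNReal).1 hRs
      have e1 : ((z.2 : ℝ) + s).toNNReal + (-s).toNNReal = z.2 := by
        rw [← Real.toNNReal_add hs1 (by linarith)]
        simp
      have e2 : ((x.2 : ℝ) + s).toNNReal + (-s).toNNReal = x.2 := by
        rw [← Real.toNNReal_add hs2 (by linarith)]
        simp
      rw [e1, e2] at this
      exact hxz.2 (by exact this)
  -- Zorn's lemma on invariant preorder extensions of Rb, coded as sets of pairs
  set Good : Set (Set ((Y × ℝ) × (Y × ℝ))) := {s |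
    Reflexive (fun x z => (x, z) ∈ s) ∧ Transitive (fun x z => (x, z) ∈ s) ∧
    Invt (fun x z => (x, z) ∈ s) ∧
    (∀ x z, Rb x z → (x, z) ∈ s) ∧ (∀ x z, StrictRel Rb x z → (z, x) ∉ s)} with hGood
  have hbase : {p : (Y × ℝ) × (Y × ℝ) | Rb p.1 p.2} ∈ Good := by
    refine ⟨hRbrefl, ?_, ?_, fun x z h => h, fun x z h => h.2⟩
    · intro a b c hab hbc; exact hRbtrans hab hbc
    · intro a b s h; exact hRbinv a b s h
  obtain ⟨M, hM0, hMmax⟩ := zorn_subset_nonempty Good (fun c hcG hchain hcne => by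
    refine ⟨⋃₀ c, ⟨?_, ?_, ?_, ?_, ?_⟩, fun s hs => Set.subset_sUnion_of_mem hs⟩
    · intro x
      obtain ⟨s, hs⟩ := hcne
      exact Set.mem_sUnion.2 ⟨s, hs, (hcG hs).1 x⟩
    · rintro a b c ⟨s, hs, hab⟩ ⟨u, hu, hbc⟩
      rcases hchain.total hs hu with h | h
      · exact ⟨u, hu, (hcG hu).2.1 (h hab) hbc⟩
      · exact ⟨s, hs, (hcG hs).2.1 hab (h hbc)⟩
    · rintro a b s ⟨t, ht, hab⟩
      exact ⟨t, ht, (hcG ht).2.2.1 a b s hab⟩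
    · intro x z h
      obtain ⟨s, hs⟩ := hcne
      exact ⟨s, hs, (hcG hs).2.2.2.1 x z h⟩
    · rintro x z h ⟨s, hs, hzx⟩
      exact (hcG hs).2.2.2.2 x z h hzx)
    _ hbase
  set P : Y × ℝ → Y × ℝ → Prop := fun x z => (x, z) ∈ M with hP
  obtain ⟨hPrefl, hPtrans, hPinv, hPext, hPstr⟩ := hMmax.prop
  have hPtrans' : Transitive P := hPtrans
  have hPrefl' : Reflexive P := hPrefl
  have hPinv' : Invt P := hPinv
  -- P is complete: otherwise extend by one orbit
  have hPcomp : ∀ x z, P x z ∨ P z x := by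
    intro a b
    by_contra hcon
    push_neg at hcon
    obtain ⟨hab, hba⟩ := hcon
    -- at least one of (a,b), (b,a) can be added safely
    have key : (∀ x y, StrictRel P x y → ¬ Relation.ReflTransGen (Sab P a b) y x) ∨
        (∀ x y, StrictRel P x y → ¬ Relation.ReflTransGen (Sab P b a) y x) := by
      by_contra h
      push_neg at h
      obtain ⟨⟨x, y, hxy, hQ⟩, ⟨x', y', hxy', hQ'⟩⟩ := h
      obtain ⟨d₀, ds, hd₀, hds, hdsum⟩ := failure_cycle hPrefl' hPtrans' hPinv' a b x y hxy hQ
      obtain ⟨e₀, es, he₀, hes, hesum⟩ := failure_cycle hPrefl' hPtrans' hPinv' b a x' y' hxy' hQ'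
      exact no_double_failure hPrefl' hPtrans' hPinv' a b d₀ ds hd₀ hds hdsum
        e₀ es he₀ hes hesum
    -- symmetric handling
    rcases key with hsafe | hsafe
    · -- add the orbit of (a, b)
      set Q : Y × ℝ → Y × ℝ → Prop := Relation.ReflTransGen (Sab P a b) with hQdef
      have hPQ : ∀ x z, P x z → Q x z := fun x z h =>
        Relation.ReflTransGen.single (Or.inl h)
      have hQmem : {p : (Y × ℝ) × (Y × ℝ) | Q p.1 p.2} ∈ Good := by
        refine ⟨fun x => Relation.ReflTransGen.refl, ?_, ?_, ?_, ?_⟩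
        · intro p q r hpq hqr; exact Relation.ReflTransGen.trans hpq hqr
        · intro p q s h; exact rtg_invt hPinv' a b p q s h
        · intro x z h; exact hPQ x z (hPext x z h)
        · intro x z h hzx
          have hstr : StrictRel P x z := ⟨hPext x z h.1, fun hc => hPstr x z h hc⟩
          exact hsafe x z hstr hzx
      have hMQ : M ⊆ {p : (Y × ℝ) × (Y × ℝ) | Q p.1 p.2} := by
        rintro ⟨x, z⟩ hxz
        exact hPQ x z hxz
      have := hMmax.2 hQmem hMQ
      have hQab : Q a b := Relation.ReflTransGen.single
        (Or.inr ⟨0, (shift_zero a).symm, (shift_zero b).symm⟩)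
      exact hab (this hQab)
    · set Q : Y × ℝ → Y × ℝ → Prop := Relation.ReflTransGen (Sab P b a) with hQdef
      have hPQ : ∀ x z, P x z → Q x z := fun x z h =>
        Relation.ReflTransGen.single (Or.inl h)
      have hQmem : {p : (Y × ℝ) × (Y × ℝ) | Q p.1 p.2} ∈ Good := by
        refine ⟨fun x => Relation.ReflTransGen.refl, ?_, ?_, ?_, ?_⟩
        · intro p q r hpq hqr; exact Relation.ReflTransGen.trans hpq hqr
        · intro p q s h; exact rtg_invt hPinv' b a p q s h
        · intro x z h; exact hPQ x z (hPext x z h)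
        · intro x z h hzx
          have hstr : StrictRel P x z := ⟨hPext x z h.1, fun hc => hPstr x z h hc⟩
          exact hsafe x z hstr hzx
      have hMQ : M ⊆ {p : (Y × ℝ) × (Y × ℝ) | Q p.1 p.2} := by
        rintro ⟨x, z⟩ hxz
        exact hPQ x z hxz
      have := hMmax.2 hQmem hMQ
      have hQba : Q b a := Relation.ReflTransGen.single
        (Or.inr ⟨0, (shift_zero b).symm, (shift_zero a).symm⟩)
      exact hba (this hQba)
  -- now restrict P back to Y × ℝ≥0
  refine ⟨fun x z => P (ι x) (ι z), ⟨?_, ?_⟩, ?_, ?_, ?_, ?_⟩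
  · intro x z h
    exact hPext _ _ (hext_weak x z h)
  · intro x z h
    have hb := hext_strict x z h
    exact ⟨hPext _ _ hb.1, fun hc => hPstr _ _ hb hc⟩
  · intro x; exact hPrefl' _
  · intro x y z hxy hyz; exact hPtrans' hxy hyz
  · intro x z; exact hPcomp _ _
  · intro y y' t t' s
    have hshift : ∀ (u : NNReal) , ι (y, t + s) = shift (s : ℝ) (ι (y, t)) := by
      intro u
      simp [hι, shift, NNReal.coe_add]
    constructor
    · intro h
      have := hPinv' _ _ (s : ℝ) h
      simpa [hι, shift, NNReal.coe_add] using this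
    · rintro ⟨h1, h2⟩
      constructor
      · have := hPinv' _ _ (s : ℝ) h1
        simpa [hι, shift, NNReal.coe_add] using this
      · intro hc
        apply h2
        have := hPinv' _ _ (-(s : ℝ)) hc
        simpa [hι, shift, NNReal.coe_add] using this
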